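/- Let (ω̂_n)_{n∈ℕ} be a stationary ergodic sequence of random row vectors in ℝ^m, each ω̂_n taking values in the set of standard basis (state-indicating) vectors, such that E[ω̂_{n+1} | ω̂_n] = ω̂_n P̃ for a fixed m×m row-stochastic matrix P̃, and such that every state has positive probability (so that Σ_ω = E[ω̂_1^T ω̂_1] is positive definite). For an m×m matrix P define L_N(P) = (1/N) Σ_{n=2}^N ‖ω̂_n − ω̂_{n−1} P‖², where the minimization is over the compact set of row-stochastic m×m matrices. Then for each N there exists a random row-stochastic matrix P̂_N with L_N(P̂_N) = inf_P L_N(P), and P̂_N → P̃ almost surely as N → ∞. -/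

import Mathlib

/-!
Because every `ω̂ₙ` is a basis vector, the normal equations of the least-squares problem are
solved by the empirical transition matrix, whose row `i` averages the successors of the visits to
state `i` before time `N`. It is row-stochastic, hence a minimiser over the stochastic matrices.
Its entries are ratios of Birkhoff sums of `ω̂₀ᵢ ω̂₁ⱼ` and `ω̂₀ᵢ`, which by the pointwise ergodic
theorem grow like `N P̃ᵢⱼ μ(ω̂₀ = eᵢ)` and `N μ(ω̂₀ = eᵢ)`; the factor `P̃ᵢⱼ` comes from the
conditional-expectation hypothesis.

The pointwise ergodic theorem for bounded observables follows from Garsia's maximal inequality: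
the limsup of the Birkhoff averages of `f` is invariant, hence a.e. a constant `c`, and for `a < c`
a.e. some Birkhoff sum of `f - a` is positive, which forces `a ≤ ∫ f`.
-/

open MeasureTheory Matrix Filter Topology

/-- The least-squares criterion `L_N(P) = N⁻¹ Σₙ ‖ω̂ₙ₊₁ − ω̂ₙ P‖²`. -/
noncomputable def lsCriterion {Ω : Type*} (m : ℕ) (X : ℕ → Ω → Fin m → ℝ)
    (N : ℕ) (P : Matrix (Fin m) (Fin m) ℝ) (ω : Ω) : ℝ :=
  (1 / (N : ℝ)) * ∑ n ∈ Finset.range N,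
    ∑ j : Fin m, (X (n+1) ω j - Matrix.vecMul (X n ω) P j) ^ 2

/-- The (compact) set of row-stochastic `m × m` matrices. -/
def stochMat (m : ℕ) : Set (Matrix (Fin m) (Fin m) ℝ) :=
  {P | (∀ i j, 0 ≤ P i j) ∧ ∀ i, ∑ j, P i j = 1}

section MaximalErgodic

variable {α : Type*} {T : α → α} {g : α → ℝ}

/-- `birkhoffSumMax T g N x = max (birkhoffSum T g 0 x, …, birkhoffSum T g N x)`, computed through
`max (S₀, …, S_{N+1}) = max 0 (g + max (S₀, …, S_N) ∘ T)`. -/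
noncomputable def birkhoffSumMax (T : α → α) (g : α → ℝ) : ℕ → α → ℝ
  | 0 => 0
  | N + 1 => fun x => max 0 (g x + birkhoffSumMax T g N (T x))

lemma birkhoffSumMax_nonneg (N : ℕ) (x : α) : 0 ≤ birkhoffSumMax T g N x := by
  cases N with
  | zero => rfl
  | succ N => exact le_max_left _ _

lemma birkhoffSumMax_mono (x : α) : Monotone (birkhoffSumMax T g · x) := by
  refine monotone_nat_of_le_succ fun N => ?_
  induction N generalizing x with
  | zero => exact birkhoffSumMax_nonneg 1 x
  | succ N ih => exact max_le_max le_rfl (add_le_add_right (ih (T x)) _)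

lemma birkhoffSum_le_birkhoffSumMax {n N : ℕ} (h : n ≤ N) (x : α) :
    birkhoffSum T g n x ≤ birkhoffSumMax T g N x := by
  induction n generalizing N x with
  | zero => exact birkhoffSumMax_nonneg N x
  | succ n ih =>
    obtain ⟨N, rfl⟩ := Nat.exists_eq_add_one.2 (Nat.zero_lt_of_lt h)
    rw [birkhoffSum_succ']
    exact le_max_of_le_right (add_le_add_right (ih (by omega) (T x)) _)

lemma birkhoffSumMax_le_indicator_add (N : ℕ) (x : α) :
    birkhoffSumMax T g N x ≤
      {y | 0 < birkhoffSumMax T g N y}.indicator g x + birkhoffSumMax T g N (T x) := by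
  by_cases hx : 0 < birkhoffSumMax T g N x
  · rw [Set.indicator_of_mem (s := {y | 0 < birkhoffSumMax T g N y}) hx]
    cases N with
    | zero => exact absurd hx (lt_irrefl 0)
    | succ N =>
      have hpos : 0 < g x + birkhoffSumMax T g N (T x) := by
        by_contra! hle
        exact hx.ne' (max_eq_left hle)
      calc birkhoffSumMax T g (N + 1) x = g x + birkhoffSumMax T g N (T x) := max_eq_right hpos.le
        _ ≤ g x + birkhoffSumMax T g (N + 1) (T x) :=
          add_le_add_right (birkhoffSumMax_mono (T x) N.le_succ) _
  · rw [Set.indicator_of_notMem (s := {y | 0 < birkhoffSumMax T g N y}) hx, zero_add]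
    exact (not_lt.1 hx).trans (birkhoffSumMax_nonneg N (T x))

variable [MeasurableSpace α] {μ : Measure α}

lemma measurable_birkhoffSumMax (hT : Measurable T) (hg : Measurable g) (N : ℕ) :
    Measurable (birkhoffSumMax T g N) := by
  induction N with
  | zero => exact measurable_const
  | succ N ih => exact measurable_const.max (hg.add (ih.comp hT))

lemma integrable_birkhoffSumMax (hT : MeasurePreserving T μ μ) (hg : Integrable g μ) (N : ℕ) :
    Integrable (birkhoffSumMax T g N) μ := by
  induction N with
  | zero => exact integrable_zero _ _ _
  | succ N ih => exact (integrable_zero _ _ _).sup (hg.add (hT.integrable_comp_of_integrable ih))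

/-- Garsia's maximal ergodic inequality. -/
theorem setIntegral_birkhoffSumMax_pos_nonneg (hT : MeasurePreserving T μ μ) (hg : Measurable g)
    (hgi : Integrable g μ) (N : ℕ) :
    0 ≤ ∫ x in {x | 0 < birkhoffSumMax T g N x}, g x ∂μ := by
  have hM := measurable_birkhoffSumMax hT.measurable hg N
  have hA : MeasurableSet {x | 0 < birkhoffSumMax T g N x} := measurableSet_lt measurable_const hM
  have hMi := integrable_birkhoffSumMax hT hgi N
  have key := integral_mono hMi ((hgi.indicator hA).add (hT.integrable_comp_of_integrable hMi))
    (birkhoffSumMax_le_indicator_add N)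
  have hinv : ∫ x, birkhoffSumMax T g N (T x) ∂μ = ∫ x, birkhoffSumMax T g N x ∂μ := by
    rw [← integral_map hT.measurable.aemeasurable hM.aestronglyMeasurable, hT.map_eq]
  rw [integral_add' (hgi.indicator hA) (hT.integrable_comp_of_integrable hMi),
    integral_indicator hA, Function.comp_def, hinv] at key
  linarith

theorem integral_nonneg_of_ae_exists_birkhoffSum_pos (hT : MeasurePreserving T μ μ)
    (hg : Measurable g) (hgi : Integrable g μ) (h : ∀ᵐ x ∂μ, ∃ n, 0 < birkhoffSum T g n x) :
    0 ≤ ∫ x, g x ∂μ := by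
  set A : ℕ → Set α := fun N => {x | 0 < birkhoffSumMax T g N x}
  have hA : ∀ N, MeasurableSet (A N) := fun N =>
    measurableSet_lt measurable_const (measurable_birkhoffSumMax hT.measurable hg N)
  have hA_mono : Monotone A := fun N N' hN x hx => hx.trans_le (birkhoffSumMax_mono x hN)
  have hA_univ : ⋃ N, A N =ᵐ[μ] (Set.univ : Set α) := by
    refine eventuallyEq_set.2 (h.mono fun x ⟨n, hn⟩ => iff_of_true ?_ trivial)
    exact Set.mem_iUnion.2 ⟨n, hn.trans_le (birkhoffSum_le_birkhoffSumMax le_rfl x)⟩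
  have hlim := tendsto_setIntegral_of_monotone hA hA_mono hgi.integrableOn
  rw [setIntegral_congr_set hA_univ, setIntegral_univ] at hlim
  exact ge_of_tendsto' hlim (setIntegral_birkhoffSumMax_pos_nonneg hT hg hgi)

end MaximalErgodic

lemma limsup_le_limsup_of_tendsto_sub {ι : Type*} {l : Filter ι} [l.NeBot] {u v : ι → ℝ}
    (hu : IsBoundedUnder (· ≥ ·) l u) (hv : IsBoundedUnder (· ≤ ·) l v)
    (h : Tendsto (fun i => u i - v i) l (𝓝 0)) : limsup u l ≤ limsup v l := by
  refine le_of_forall_pos_le_add fun ε hε => limsup_le_of_le hu.isCoboundedUnder_flip ?_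
  filter_upwards [eventually_lt_of_limsup_lt (lt_add_of_pos_right _ (half_pos hε)) hv,
    h.eventually (gt_mem_nhds (half_pos hε))] with i hvi hi
  linarith

section PointwiseErgodic

variable {α : Type*} {T : α → α} {f : α → ℝ} {B : ℝ}

lemma abs_birkhoffAverage_le (hB : ∀ x, |f x| ≤ B) (n : ℕ) (x : α) :
    |birkhoffAverage ℝ T f n x| ≤ B := by
  rcases n.eq_zero_or_pos with rfl | hn
  · simpa using (abs_nonneg _).trans (hB x)
  rw [birkhoffAverage, smul_eq_mul, abs_mul, abs_inv, Nat.abs_cast, inv_mul_le_iff₀ (by positivity)]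
  calc |birkhoffSum T f n x| ≤ ∑ k ∈ Finset.range n, |f (T^[k] x)| := Finset.abs_sum_le_sum_abs _ _
    _ ≤ ∑ _k ∈ Finset.range n, B := Finset.sum_le_sum fun k _ => hB (T^[k] x)
    _ = n * B := by simp

lemma isBoundedUnder_le_birkhoffAverage (hB : ∀ x, |f x| ≤ B) (x : α) :
    IsBoundedUnder (· ≤ ·) atTop (birkhoffAverage ℝ T f · x) :=
  isBoundedUnder_of ⟨B, fun n => (abs_le.1 (abs_birkhoffAverage_le hB n x)).2⟩

lemma isBoundedUnder_ge_birkhoffAverage (hB : ∀ x, |f x| ≤ B) (x : α) :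
    IsBoundedUnder (· ≥ ·) atTop (birkhoffAverage ℝ T f · x) :=
  isBoundedUnder_of ⟨-B, fun n => (abs_le.1 (abs_birkhoffAverage_le hB n x)).1⟩

lemma limsup_birkhoffAverage_apply (hB : ∀ x, |f x| ≤ B) (x : α) :
    limsup (birkhoffAverage ℝ T f · (T x)) atTop = limsup (birkhoffAverage ℝ T f · x) atTop := by
  have hbdd : Bornology.IsBounded (Set.range f) :=
    isBounded_iff_forall_norm_le.2 ⟨B, Set.forall_mem_range.2 hB⟩
  have h := tendsto_birkhoffAverage_apply_sub_birkhoffAverage' ℝ hbdd T x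
  refine le_antisymm (limsup_le_limsup_of_tendsto_sub (isBoundedUnder_ge_birkhoffAverage hB _)
    (isBoundedUnder_le_birkhoffAverage hB _) h) (limsup_le_limsup_of_tendsto_sub
    (isBoundedUnder_ge_birkhoffAverage hB _) (isBoundedUnder_le_birkhoffAverage hB _) ?_)
  simpa using h.neg

variable [MeasurableSpace α] {μ : Measure α} [IsProbabilityMeasure μ]

lemma measurable_birkhoffAverage (hT : Measurable T) (hf : Measurable f) (n : ℕ) :
    Measurable (birkhoffAverage ℝ T f n) :=
  (Finset.measurable_sum _ fun k _ => hf.comp (hT.iterate k)).const_smul ((n : ℝ)⁻¹)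

theorem Ergodic.ae_limsup_birkhoffAverage_le (hErg : Ergodic T μ) (hf : Measurable f)
    (hB : ∀ x, |f x| ≤ B) : ∀ᵐ x ∂μ, limsup (birkhoffAverage ℝ T f · x) atTop ≤ ∫ x, f x ∂μ := by
  obtain ⟨c, hc⟩ := hErg.toPreErgodic.ae_eq_const_of_ae_eq_comp
    (.limsup (measurable_birkhoffAverage hErg.measurable hf))
    (funext (limsup_birkhoffAverage_apply hB))
  suffices c ≤ ∫ x, f x ∂μ from hc.mono fun x hx => hx.trans_le this
  refine le_of_forall_lt_imp_le_of_dense fun a ha => ?_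
  have hpos : ∀ᵐ x ∂μ, ∃ n, 0 < birkhoffSum T (fun y => f y - a) n x := by
    filter_upwards [hc] with x hx
    have hfreq := frequently_lt_of_lt_limsup
      (isBoundedUnder_ge_birkhoffAverage hB x).isCoboundedUnder_flip (ha.trans_eq hx.symm)
    obtain ⟨n, hn, hn0⟩ := (hfreq.and_eventually (eventually_gt_atTop 0)).exists
    refine ⟨n, ?_⟩
    have hn' : (n : ℝ) * a < birkhoffSum T f n x := by
      rwa [birkhoffAverage, smul_eq_mul, ← div_eq_inv_mul, lt_div_iff₀' (by positivity)] at hn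
    simpa [birkhoffSum, Finset.sum_sub_distrib] using hn'
  have hfi : Integrable f μ := .of_bound hf.aestronglyMeasurable B (.of_forall hB)
  have := integral_nonneg_of_ae_exists_birkhoffSum_pos hErg.toMeasurePreserving
    (hf.sub_const a) (hfi.sub (integrable_const a)) hpos
  rw [integral_sub hfi (integrable_const a), integral_const] at this
  simpa using this

theorem Ergodic.ae_tendsto_birkhoffAverage (hErg : Ergodic T μ) (hf : Measurable f)
    (hB : ∀ x, |f x| ≤ B) :
    ∀ᵐ x ∂μ, Tendsto (birkhoffAverage ℝ T f · x) atTop (𝓝 (∫ x, f x ∂μ)) := by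
  have hB' : ∀ x, |(-f) x| ≤ B := by simpa using hB
  filter_upwards [hErg.ae_limsup_birkhoffAverage_le hf hB,
    hErg.ae_limsup_birkhoffAverage_le hf.neg hB'] with x hup hlow
  refine tendsto_order.2 ⟨fun a ha => ?_, fun a ha =>
    eventually_lt_of_limsup_lt (hup.trans_lt ha) (isBoundedUnder_le_birkhoffAverage hB x)⟩
  have hlt : limsup (birkhoffAverage ℝ T (-f) · x) atTop < -a :=
    hlow.trans_lt (by simpa [integral_neg] using neg_lt_neg ha)
  have hneg := eventually_lt_of_limsup_lt hlt (isBoundedUnder_le_birkhoffAverage hB' x)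
  filter_upwards [hneg] with n hn
  simpa [birkhoffAverage_neg] using hn

end PointwiseErgodic

section StateVector

variable {ι : Type*} [DecidableEq ι]

def IsStateVector (v : ι → ℝ) : Prop := ∃ k, v = Pi.single k 1

namespace IsStateVector

variable {v : ι → ℝ}

lemma nonneg (hv : IsStateVector v) (i : ι) : 0 ≤ v i := by
  obtain ⟨k, rfl⟩ := hv
  rcases eq_or_ne i k with rfl | h <;> simp [*]

lemma abs_le_one (hv : IsStateVector v) (i : ι) : |v i| ≤ 1 := by
  obtain ⟨k, rfl⟩ := hv
  rcases eq_or_ne i k with rfl | h <;> simp [*]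

lemma sum_eq_one [Fintype ι] (hv : IsStateVector v) : ∑ i, v i = 1 := by
  obtain ⟨k, rfl⟩ := hv
  simp

lemma mul_vecMul [Fintype ι] (hv : IsStateVector v) (P : Matrix ι ι ℝ) (i j : ι) :
    v i * vecMul v P j = v i * P i j := by
  obtain ⟨k, rfl⟩ := hv
  rw [single_one_vecMul, row_apply]
  rcases eq_or_ne i k with rfl | h
  · rfl
  · simp [Pi.single_eq_of_ne h]

end IsStateVector

end StateVector

theorem lsCriterion_le_of_normal_eq {Ω : Type*} {m : ℕ} {X : ℕ → Ω → Fin m → ℝ} {N : ℕ} {ω : Ω}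
    {Q : Matrix (Fin m) (Fin m) ℝ}
    (hQ : ∀ i j, ∑ n ∈ Finset.range N, X n ω i * (X (n + 1) ω j - vecMul (X n ω) Q j) = 0)
    (P : Matrix (Fin m) (Fin m) ℝ) : lsCriterion m X N Q ω ≤ lsCriterion m X N P ω := by
  set r : ℕ → Fin m → ℝ := fun n j => X (n + 1) ω j - vecMul (X n ω) Q j
  set d : ℕ → Fin m → ℝ := fun n j => vecMul (X n ω) (Q - P) j
  have hcross : ∑ n ∈ Finset.range N, ∑ j, r n j * d n j = 0 := by
    calc ∑ n ∈ Finset.range N, ∑ j, r n j * d n j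
        = ∑ i, ∑ j, (Q - P) i j * ∑ n ∈ Finset.range N, X n ω i * r n j := by
          simp only [d, vecMul, dotProduct, Finset.mul_sum]
          rw [Finset.sum_comm]
          simp_rw [Finset.sum_comm (s := Finset.range N)]
          rw [Finset.sum_comm]
          simp only [mul_assoc, mul_comm, mul_left_comm]
      _ = 0 := by simp [r, hQ]
  have hsplit : ∀ n j, (X (n + 1) ω j - vecMul (X n ω) P j) ^ 2
      = r n j ^ 2 + 2 * (r n j * d n j) + d n j ^ 2 := by
    intro n j
    simp only [r, d, vecMul_sub, Pi.sub_apply]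
    ring
  unfold lsCriterion
  gcongr 1 / _ * ?_
  simp only [hsplit, Finset.sum_add_distrib, ← Finset.mul_sum, hcross]
  rw [mul_zero, add_zero]
  exact le_add_of_nonneg_right
    (Finset.sum_nonneg fun n _ => Finset.sum_nonneg fun j _ => sq_nonneg _)

section EmpiricalTransition

variable {ι : Type*} {x : ℕ → ι → ℝ} {N : ℕ}

def visitCount (x : ℕ → ι → ℝ) (N : ℕ) (i : ι) : ℝ := ∑ n ∈ Finset.range N, x n i

def transitionCount (x : ℕ → ι → ℝ) (N : ℕ) (i j : ι) : ℝ :=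
  ∑ n ∈ Finset.range N, x n i * x (n + 1) j

variable [DecidableEq ι]

/-- Rows of states not visited before time `N` are filled in with those of the identity matrix. -/
noncomputable def empiricalTransition (x : ℕ → ι → ℝ) (N : ℕ) : Matrix ι ι ℝ :=
  of fun i j => if visitCount x N i = 0 then (1 : Matrix ι ι ℝ) i j
    else transitionCount x N i j / visitCount x N i

lemma sum_transitionCount [Fintype ι] (hx : ∀ n, IsStateVector (x n)) (i : ι) :
    ∑ j, transitionCount x N i j = visitCount x N i := by
  simp only [transitionCount, visitCount]
  rw [Finset.sum_comm]
  simp [← Finset.mul_sum, (hx _).sum_eq_one]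

lemma empiricalTransition_mem_stochMat {m : ℕ} {x : ℕ → Fin m → ℝ}
    (hx : ∀ n, IsStateVector (x n)) (N : ℕ) : empiricalTransition x N ∈ stochMat m := by
  refine ⟨fun i j => ?_, fun i => ?_⟩ <;> simp only [empiricalTransition, of_apply]
  · split_ifs
    · rw [one_apply]; split_ifs <;> norm_num
    · exact div_nonneg (Finset.sum_nonneg fun n _ => mul_nonneg ((hx n).nonneg i)
        ((hx (n + 1)).nonneg j)) (Finset.sum_nonneg fun n _ => (hx n).nonneg i)
  · split_ifs with h
    · simp [one_apply]
    · rw [← Finset.sum_div, sum_transitionCount hx, div_self h]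

lemma sum_mul_sub_vecMul_empiricalTransition_eq_zero [Fintype ι]
    (hx : ∀ n, IsStateVector (x n)) (i j : ι) :
    ∑ n ∈ Finset.range N, x n i * (x (n + 1) j - vecMul (x n) (empiricalTransition x N) j) = 0 := by
  simp only [mul_sub, (hx _).mul_vecMul]
  by_cases h : visitCount x N i = 0
  · have hzero : ∀ n ∈ Finset.range N, x n i = 0 :=
      (Finset.sum_eq_zero_iff_of_nonneg fun n _ => (hx n).nonneg i).1 h
    exact Finset.sum_eq_zero fun n hn => by simp [hzero n hn]
  · rw [Finset.sum_sub_distrib, ← Finset.sum_mul]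
    simp only [empiricalTransition, of_apply, if_neg h]
    rw [← visitCount, ← transitionCount, mul_div_cancel₀ _ h, sub_self]

lemma lsCriterion_empiricalTransition_eq_iInf {m : ℕ} {Ω : Type*} {X : ℕ → Ω → Fin m → ℝ}
    {ω : Ω} (hX : ∀ n, IsStateVector (X n ω)) (N : ℕ) :
    lsCriterion m X N (empiricalTransition (X · ω) N) ω
      = ⨅ P : stochMat m, lsCriterion m X N P.1 ω := by
  have hmem := empiricalTransition_mem_stochMat hX N
  have hleast : IsLeast (Set.range fun P : stochMat m => lsCriterion m X N P.1 ω)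
      (lsCriterion m X N (empiricalTransition (X · ω) N) ω) :=
    ⟨⟨⟨_, hmem⟩, rfl⟩, Set.forall_mem_range.2 fun P =>
      lsCriterion_le_of_normal_eq (sum_mul_sub_vecMul_empiricalTransition_eq_zero hX) P.1⟩
  have : Nonempty (stochMat m) := ⟨⟨_, hmem⟩⟩
  exact hleast.isGLB.ciInf_eq.symm

lemma tendsto_empiricalTransition {P : Matrix ι ι ℝ} {d : ι → ℝ} (hd : ∀ i, 0 < d i)
    (hvisit : ∀ i, Tendsto (fun N => visitCount x N i / N) atTop (𝓝 (d i)))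
    (htrans : ∀ i j, Tendsto (fun N => transitionCount x N i j / N) atTop (𝓝 (P i j * d i))) :
    Tendsto (empiricalTransition x) atTop (𝓝 P) := by
  refine tendsto_pi_nhds.2 fun i => tendsto_pi_nhds.2 fun j => ?_
  have hratio := (htrans i j).div (hvisit i) (hd i).ne'
  rw [mul_div_cancel_right₀ _ (hd i).ne'] at hratio
  refine hratio.congr' ?_
  filter_upwards [(hvisit i).eventually_const_lt (hd i)] with N hN
  have hN0 : (N : ℝ) ≠ 0 := by rintro h; simp [h] at hN
  have hv0 : visitCount x N i ≠ 0 := by rintro h; simp [h] at hN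
  simp only [empiricalTransition, of_apply, if_neg hv0, Pi.div_apply]
  exact div_div_div_cancel_right₀ hN0 _ _

end EmpiricalTransition

section StationaryChain

variable {Ω ι : Type*} {T : Ω → Ω}

lemma apply_add_eq_apply_iterate {β : Type*} {X : ℕ → Ω → β}
    (hshift : ∀ n ω, X (n + 1) ω = X n (T ω)) (n k : ℕ) (ω : Ω) : X (n + k) ω = X k (T^[n] ω) := by
  induction n generalizing ω with
  | zero => simp
  | succ n ih => rw [add_right_comm, hshift, ih, ← Function.iterate_succ_apply]

variable {X : ℕ → Ω → ι → ℝ}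

lemma visitCount_eq_birkhoffSum (hshift : ∀ n ω, X (n + 1) ω = X n (T ω)) (N : ℕ) (i : ι) (ω : Ω) :
    visitCount (X · ω) N i = birkhoffSum T (fun ω => X 0 ω i) N ω := by
  refine Finset.sum_congr rfl fun n _ => ?_
  exact congrFun (apply_add_eq_apply_iterate hshift n 0 ω) i

lemma transitionCount_eq_birkhoffSum (hshift : ∀ n ω, X (n + 1) ω = X n (T ω)) (N : ℕ)
    (i j : ι) (ω : Ω) :
    transitionCount (X · ω) N i j = birkhoffSum T (fun ω => X 0 ω i * X 1 ω j) N ω := by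
  refine Finset.sum_congr rfl fun n _ => ?_
  dsimp only
  rw [← apply_add_eq_apply_iterate hshift n 0 ω, ← apply_add_eq_apply_iterate hshift n 1 ω]
  rfl

variable [MeasurableSpace Ω]

lemma measurable_empiricalTransition_apply [DecidableEq ι]
    (hX : ∀ n i, Measurable fun ω => X n ω i) (N : ℕ) (i j : ι) :
    Measurable fun ω => empiricalTransition (X · ω) N i j := by
  have hv : Measurable fun ω => visitCount (X · ω) N i := Finset.measurable_sum _ fun n _ => hX n i
  have ht : Measurable fun ω => transitionCount (X · ω) N i j :=
    Finset.measurable_sum _ fun n _ => (hX n i).mul (hX (n + 1) j)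
  exact Measurable.ite (measurableSet_eq_fun hv measurable_const) measurable_const (ht.div hv)

variable {μ : Measure Ω} [IsProbabilityMeasure μ] [DecidableEq ι]

lemma ae_tendsto_visitCount_div (hErg : Ergodic T μ) (hX : ∀ n i, Measurable fun ω => X n ω i)
    (hshift : ∀ n ω, X (n + 1) ω = X n (T ω)) (hstate : ∀ n ω, IsStateVector (X n ω)) (i : ι) :
    ∀ᵐ ω ∂μ, Tendsto (fun N => visitCount (X · ω) N i / N) atTop (𝓝 (∫ ω, X 0 ω i ∂μ)) :=
  (hErg.ae_tendsto_birkhoffAverage (hX 0 i) fun ω => (hstate 0 ω).abs_le_one i).mono fun ω h => by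
    simpa [visitCount_eq_birkhoffSum hshift, birkhoffAverage, div_eq_inv_mul] using h

lemma ae_tendsto_transitionCount_div (hErg : Ergodic T μ) (hX : ∀ n i, Measurable fun ω => X n ω i)
    (hshift : ∀ n ω, X (n + 1) ω = X n (T ω)) (hstate : ∀ n ω, IsStateVector (X n ω)) (i j : ι) :
    ∀ᵐ ω ∂μ, Tendsto (fun N => transitionCount (X · ω) N i j / N) atTop
      (𝓝 (∫ ω, X 0 ω i * X 1 ω j ∂μ)) := by
  have hB : ∀ ω, |X 0 ω i * X 1 ω j| ≤ 1 := fun ω => by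
    rw [abs_mul]
    exact mul_le_one₀ ((hstate 0 ω).abs_le_one i) (abs_nonneg _) ((hstate 1 ω).abs_le_one j)
  refine (hErg.ae_tendsto_birkhoffAverage (f := fun ω => X 0 ω i * X 1 ω j)
    ((hX 0 i).mul (hX 1 j)) hB).mono fun ω h => ?_
  simpa [transitionCount_eq_birkhoffSum hshift, birkhoffAverage, div_eq_inv_mul] using h

end StationaryChain

section StateProcess

variable {Ω ι : Type*} [MeasurableSpace Ω] {μ : Measure Ω} [IsFiniteMeasure μ]
  [DecidableEq ι] {Y Z : Ω → ι → ℝ}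

lemma integral_mul_eq_of_condExp_eq_vecMul [Fintype ι] {P : Matrix ι ι ℝ} {j : ι}
    (hY : Measurable Y) (hYs : ∀ ω, IsStateVector (Y ω)) (hZ : Integrable (fun ω => Z ω j) μ)
    (hcond : μ[fun ω => Z ω j | MeasurableSpace.comap Y inferInstance]
      =ᵐ[μ] fun ω => vecMul (Y ω) P j) (i : ι) :
    ∫ ω, Y ω i * Z ω j ∂μ = P i j * ∫ ω, Y ω i ∂μ := by
  have hle : MeasurableSpace.comap Y inferInstance ≤ ‹MeasurableSpace Ω› := hY.comap_le
  have hYi : StronglyMeasurable[MeasurableSpace.comap Y inferInstance] fun ω => Y ω i :=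
    ((measurable_pi_apply i).comp (comap_measurable Y)).stronglyMeasurable
  have hYZ : Integrable (fun ω => Y ω i * Z ω j) μ :=
    hZ.bdd_mul (hYi.mono hle).aestronglyMeasurable (ae_of_all _ fun ω => (hYs ω).abs_le_one i)
  calc ∫ ω, Y ω i * Z ω j ∂μ
      = ∫ ω, (μ[fun ω => Y ω i * Z ω j | MeasurableSpace.comap Y inferInstance]) ω ∂μ :=
        (integral_condExp hle).symm
    _ = ∫ ω, Y ω i * vecMul (Y ω) P j ∂μ :=
        integral_congr_ae ((condExp_mul_of_stronglyMeasurable_left hYi hYZ hZ).trans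
          (hcond.mono fun ω hω => by simp [hω]))
    _ = P i j * ∫ ω, Y ω i ∂μ := by
        simp_rw [(hYs _).mul_vecMul, integral_mul_const, mul_comm]

lemma integral_apply_pos_of_measure_pos (hY : Measurable Y) (hYs : ∀ ω, IsStateVector (Y ω))
    {i : ι} (hpos : 0 < μ {ω | Y ω = Pi.single i 1}) : 0 < ∫ ω, Y ω i ∂μ := by
  have hYi : Measurable fun ω => Y ω i := (measurable_pi_apply i).comp hY
  rw [integral_pos_iff_support_of_nonneg (fun ω => (hYs ω).nonneg i)
    (.of_bound hYi.aestronglyMeasurable 1 (ae_of_all _ fun ω => (hYs ω).abs_le_one i))]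
  refine hpos.trans_le (measure_mono fun ω (hω : Y ω = _) => ?_)
  simp [Function.mem_support, hω]

end StateProcess

theorem ls_estimator_consistency_general
    {Ω : Type*} [MeasurableSpace Ω] (μ : Measure Ω) [IsProbabilityMeasure μ]
    (m : ℕ)
    (T : Ω → Ω) (hErg : Ergodic T μ)
    (X : ℕ → Ω → Fin m → ℝ) (hXmeas : ∀ n, Measurable (X n))
    (hshift : ∀ n ω, X (n+1) ω = X n (T ω))
    (hind : ∀ n ω, ∃ i : Fin m, X n ω = Pi.single i 1)
    (Pt : Matrix (Fin m) (Fin m) ℝ)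
    (hcond : ∀ (n : ℕ) (j : Fin m),
      μ[fun ω => X (n+1) ω j | MeasurableSpace.comap (X n) inferInstance]
        =ᵐ[μ] fun ω => Matrix.vecMul (X n ω) Pt j)
    (hposstate : ∀ i : Fin m, 0 < μ {ω | X 0 ω = Pi.single i 1}) :
    ∃ Phat : ℕ → Ω → Matrix (Fin m) (Fin m) ℝ,
      (∀ (N : ℕ) (i j : Fin m), Measurable fun ω => Phat N ω i j) ∧
      (∀ N ω, Phat N ω ∈ stochMat m ∧
        lsCriterion m X N (Phat N ω) ω = ⨅ P : stochMat m, lsCriterion m X N P.1 ω) ∧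
      ∀ᵐ ω ∂μ, Tendsto (fun N => Phat N ω) atTop (nhds Pt) := by
  have hX : ∀ n i, Measurable fun ω => X n ω i := fun n i => (measurable_pi_apply i).comp (hXmeas n)
  have hstate : ∀ n ω, IsStateVector (X n ω) := hind
  refine ⟨fun N ω => empiricalTransition (X · ω) N, measurable_empiricalTransition_apply hX,
    fun N ω => ⟨empiricalTransition_mem_stochMat (hstate · ω) N,
      lsCriterion_empiricalTransition_eq_iInf (hstate · ω) N⟩, ?_⟩
  have hint : ∀ i j, ∫ ω, X 0 ω i * X 1 ω j ∂μ = Pt i j * ∫ ω, X 0 ω i ∂μ := fun i j =>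
    integral_mul_eq_of_condExp_eq_vecMul (hXmeas 0) (hstate 0)
      (.of_bound (hX 1 j).aestronglyMeasurable 1 (ae_of_all _ fun ω => (hstate 1 ω).abs_le_one j))
      (hcond 0 j) i
  filter_upwards [ae_all_iff.2 (ae_tendsto_visitCount_div hErg hX hshift hstate),
    ae_all_iff.2 fun i => ae_all_iff.2 (ae_tendsto_transitionCount_div hErg hX hshift hstate i)]
    with ω hvisit htrans
  exact tendsto_empiricalTransition
    (fun i => integral_apply_pos_of_measure_pos (hXmeas 0) (hstate 0) (hposstate i)) hvisit
    fun i j => hint i j ▸ htrans i j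

/-- Theorem 1: for a stationary ergodic sequence of state-indicating vectors with
`E[ω̂ₙ₊₁ | ω̂ₙ] = ω̂ₙ P̃` and all states of positive probability, least-squares
estimators exist and converge almost surely to `P̃`. -/
theorem ls_estimator_consistency
    {Ω : Type*} [MeasurableSpace Ω] (μ : Measure Ω) [IsProbabilityMeasure μ]
    (m : ℕ) (hm : 0 < m)
    (T : Ω → Ω) (hT : MeasurePreserving T μ μ) (hErg : Ergodic T μ)
    (X : ℕ → Ω → Fin m → ℝ) (hXmeas : ∀ n, Measurable (X n))
    (hshift : ∀ n ω, X (n+1) ω = X n (T ω))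
    (hind : ∀ n ω, ∃ i : Fin m, X n ω = Pi.single i 1)
    (Pt : Matrix (Fin m) (Fin m) ℝ) (hPt : Pt ∈ stochMat m)
    (hcond : ∀ (n : ℕ) (j : Fin m),
      μ[fun ω => X (n+1) ω j | MeasurableSpace.comap (X n) inferInstance]
        =ᵐ[μ] fun ω => Matrix.vecMul (X n ω) Pt j)
    (hposstate : ∀ i : Fin m, 0 < μ {ω | X 0 ω = Pi.single i 1}) :
    ∃ Phat : ℕ → Ω → Matrix (Fin m) (Fin m) ℝ,
      (∀ (N : ℕ) (i j : Fin m), Measurable fun ω => Phat N ω i j) ∧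
      (∀ N ω, Phat N ω ∈ stochMat m ∧
        lsCriterion m X N (Phat N ω) ω = ⨅ P : stochMat m, lsCriterion m X N P.1 ω) ∧
      ∀ᵐ ω ∂μ, Tendsto (fun N => Phat N ω) atTop (nhds Pt) :=
  ls_estimator_consistency_general μ m T hErg X hXmeas hshift hind Pt hcond hposstate
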